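/- Let A ∈ (-1,1), A ≠ 0, q_A = (1-A^2)/(1+A^2). Suppose (a_k)_{k≥1} is a bounded real sequence and C ∈ ℝ satisfy: C(1+4A^2+A^4) = A^2(2+q_A)a_2; ((1+A^4)(1-q_A)-4A^2 q_A)a_1 = A^2(3+q_A)a_3 + A^2(1+q_A)a_1 + 4A(1+A^2)C; ((1+A^4)(2-q_A)-4A^2 q_A)a_2 = A^2(4+q_A)a_4 - 2A^2 C; and ((1+A^4)(k-q_A)-4A^2 q_A)a_k = A^2(k+2+q_A)a_{k+2} + A^2(k-2+q_A)a_{k-2} for all k ≥ 3. Then a_k = 0 for all k ≥ 1 and C = 0. -/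
import Mathlib


theorem linearisation_injective_coefficients (A : ℝ) (hA : A ∈ Set.Ioo (-1 : ℝ) 1)
    (hA0 : A ≠ 0) (q : ℝ) (hq : q = (1 - A ^ 2) / (1 + A ^ 2))
    (a : ℕ → ℝ) (C : ℝ)
    (hbdd : ∃ M : ℝ, ∀ k : ℕ, 1 ≤ k → |a k| ≤ M)
    (h0 : C * (1 + 4 * A ^ 2 + A ^ 4) = A ^ 2 * (2 + q) * a 2)
    (h1 : ((1 + A ^ 4) * (1 - q) - 4 * A ^ 2 * q) * a 1
        = A ^ 2 * (3 + q) * a 3 + A ^ 2 * (1 + q) * a 1 + 4 * A * (1 + A ^ 2) * C)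
    (h2 : ((1 + A ^ 4) * (2 - q) - 4 * A ^ 2 * q) * a 2
        = A ^ 2 * (4 + q) * a 4 - 2 * A ^ 2 * C)
    (hk : ∀ k : ℕ, 3 ≤ k →
      ((1 + A ^ 4) * ((k : ℝ) - q) - 4 * A ^ 2 * q) * a k
        = A ^ 2 * ((k : ℝ) + 2 + q) * a (k + 2) + A ^ 2 * ((k : ℝ) - 2 + q) * a (k - 2)) :
    (∀ k : ℕ, 1 ≤ k → a k = 0) ∧ C = 0 := by
  obtain ⟨hAm, hAp⟩ := hA
  obtain ⟨M, hM⟩ := hbdd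
  have hB0 : (0:ℝ) < A ^ 2 := by positivity
  have hB1 : A ^ 2 < 1 := by nlinarith
  have hne : (1 + A ^ 2) ≠ 0 := by positivity
  have hq' : q * (1 + A ^ 2) = 1 - A ^ 2 := by rw [hq]; field_simp
  have hq0 : 0 < q := by rw [hq]; apply div_pos <;> nlinarith
  have hM0 : 0 ≤ M := le_trans (abs_nonneg _) (hM 1 le_rfl)
  -- first-order factorization of the recurrence
  have hrec : ∀ k : ℕ, 1 ≤ k →
      A ^ 2 * ((k:ℝ) + 4 + q) * (a (k+4) - A ^ 2 * a (k+2))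
        = ((k:ℝ) + q) * (a (k+2) - A ^ 2 * a k) := by
    intro k hk1
    have H := hk (k+2) (by omega)
    rw [show k + 2 - 2 = k from by omega, show k+2+2 = k+4 from by omega] at H
    push_cast at H
    linear_combination -H - 2*(1+A^2)*(a (k+2))*hq'
  -- iterated product identity
  have hprod : ∀ m : ℕ, 1 ≤ m → ∀ n : ℕ,
      (A ^ 2) ^ n * ((m:ℝ) + 2*n + q) * ((m:ℝ) + 2*n + 2 + q)
          * (a (m + 2*n + 2) - A ^ 2 * a (m + 2*n))
        = ((m:ℝ) + q) * ((m:ℝ) + 2 + q) * (a (m + 2) - A ^ 2 * a m) := by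
    intro m hm n
    induction n with
    | zero => push_cast; ring_nf
    | succ n ih =>
      have H := hrec (m + 2*n) (by omega)
      push_cast at H
      rw [show m + 2*(n+1) + 2 = m + 2*n + 4 from by omega,
          show m + 2*(n+1) = m + 2*n + 2 from by omega]
      push_cast
      calc (A ^ 2) ^ (n+1) * ((m:ℝ) + 2*(n+1) + q) * ((m:ℝ) + 2*(n+1) + 2 + q)
            * (a (m + 2*n + 4) - A ^ 2 * a (m + 2*n + 2))
          = (A ^ 2) ^ n * ((m:ℝ) + 2*n + 2 + q) *
              (A ^ 2 * ((m:ℝ) + 2*n + 4 + q) * (a (m + 2*n + 4) - A ^ 2 * a (m + 2*n + 2))) := by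
            ring
        _ = (A ^ 2) ^ n * ((m:ℝ) + 2*n + 2 + q) *
              (((m:ℝ) + 2*n + q) * (a (m + 2*n + 2) - A ^ 2 * a (m + 2*n))) := by
            rw [show ((m:ℝ) + 2*n + 4 + q) = ((m:ℝ) + 2*n) + 4 + q from by ring,
                show ((m:ℝ) + 2*n + q) = ((m:ℝ) + 2*n) + q from by ring]
            rw [H]
        _ = ((m:ℝ) + q) * ((m:ℝ) + 2 + q) * (a (m + 2) - A ^ 2 * a m) := by
            rw [← ih]; ring
  -- boundedness kills the ratio: a (m+2) = A^2 * a m for m ≥ 1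
  have hstep : ∀ m : ℕ, 1 ≤ m → a (m + 2) = A ^ 2 * a m := by
    intro m hm
    set c : ℝ := ((m:ℝ) + q) * ((m:ℝ) + 2 + q) * |a (m + 2) - A ^ 2 * a m| with hc
    have habs : ∀ n : ℕ, c = (A ^ 2) ^ n * (((m:ℝ) + 2*n + q) * (((m:ℝ) + 2*n + 2 + q)
        * |a (m + 2*n + 2) - A ^ 2 * a (m + 2*n)|)) := by
      intro n
      have := hprod m hm n
      have h1' : (0:ℝ) ≤ (A ^ 2) ^ n * ((m:ℝ) + 2*n + q) * ((m:ℝ) + 2*n + 2 + q) := by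
        positivity
      calc c = |((m:ℝ) + q) * ((m:ℝ) + 2 + q) * (a (m + 2) - A ^ 2 * a m)| := by
            rw [abs_mul]
            congr 1
            rw [abs_of_nonneg (by positivity)]
        _ = |(A ^ 2) ^ n * ((m:ℝ) + 2*n + q) * ((m:ℝ) + 2*n + 2 + q)
              * (a (m + 2*n + 2) - A ^ 2 * a (m + 2*n))| := by rw [this]
        _ = _ := by
            rw [abs_mul, abs_of_nonneg h1']; ring
    have hub : ∀ n : ℕ, 1 ≤ n → c ≤ ((m:ℝ)+5)^2 * ((1 + A^2) * M) * ((n:ℝ)^2 * (A^2)^n) := by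
      intro n hn
      have hn1 : (1:ℝ) ≤ (n:ℝ) := by exact_mod_cast hn
      have hwb : |a (m + 2*n + 2) - A ^ 2 * a (m + 2*n)| ≤ (1 + A^2) * M := by
        calc |a (m + 2*n + 2) - A ^ 2 * a (m + 2*n)|
            ≤ |a (m + 2*n + 2)| + |A ^ 2 * a (m + 2*n)| := abs_sub _ _
          _ ≤ M + A^2 * M := by
              gcongr
              · exact hM _ (by omega)
              · rw [abs_mul, abs_of_nonneg hB0.le]
                gcongr
                exact hM _ (by omega)
          _ = (1 + A^2) * M := by ring
      have hlin : ((m:ℝ) + 2*n + 2 + q) ≤ ((m:ℝ)+5) * n := by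
        have hq1 : q < 1 := by
          rw [hq]; rw [div_lt_one (by positivity)]; nlinarith
        have hm1 : (1:ℝ) ≤ (m:ℝ) := by exact_mod_cast hm
        nlinarith
      have hlin' : ((m:ℝ) + 2*n + q) ≤ ((m:ℝ)+5) * n := le_trans (by linarith) hlin
      rw [habs n]
      have h5 : (0:ℝ) < (m:ℝ)+5 := by positivity
      calc (A ^ 2) ^ n * (((m:ℝ) + 2*n + q) * (((m:ℝ) + 2*n + 2 + q)
            * |a (m + 2*n + 2) - A ^ 2 * a (m + 2*n)|))
          ≤ (A ^ 2) ^ n * ((((m:ℝ)+5) * n) * ((((m:ℝ)+5) * n) * ((1 + A^2) * M))) := by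
            gcongr <;> first | positivity | assumption
        _ = ((m:ℝ)+5)^2 * ((1 + A^2) * M) * ((n:ℝ)^2 * (A^2)^n) := by ring
    have htend : Filter.Tendsto
        (fun n : ℕ => ((m:ℝ)+5)^2 * ((1 + A^2) * M) * ((n:ℝ)^2 * (A^2)^n))
        Filter.atTop (nhds 0) := by
      have := (tendsto_pow_const_mul_const_pow_of_lt_one 2 hB0.le hB1).const_mul
        (((m:ℝ)+5)^2 * ((1 + A^2) * M))
      simpa using this
    have hc0 : c ≤ 0 := by
      refine ge_of_tendsto htend ?_
      filter_upwards [Filter.eventually_ge_atTop 1] with n hn using hub n hn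
    have hcnn : 0 ≤ ((m:ℝ) + q) * ((m:ℝ) + 2 + q) := by positivity
    have hmq : 0 < ((m:ℝ) + q) * ((m:ℝ) + 2 + q) := by positivity
    have : |a (m + 2) - A ^ 2 * a m| ≤ 0 := by
      by_contra h
      push_neg at h
      nlinarith [hc0]
    have := le_antisymm this (abs_nonneg _)
    have := abs_eq_zero.mp this
    linarith [this]
  -- boundary conditions
  have ha4 : a 4 = A ^ 2 * a 2 := hstep 2 (by norm_num)
  have ha3 : a 3 = A ^ 2 * a 1 := hstep 1 (by norm_num)
  have e2 : q * a 2 + 2 * A ^ 2 * C = 0 := by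
    linear_combination h2 + A^2*(4+q)*ha4 + 2*(1+A^2)*(a 2)*hq'
  have ea2 : (q*(1+4*A^2+A^4) + 2*A^4*(2+q)) * a 2 = 0 := by
    linear_combination (1+4*A^2+A^4)*e2 - 2*A^2*h0
  have ha2 : a 2 = 0 := by
    have hpos : 0 < q*(1+4*A^2+A^4) + 2*A^4*(2+q) := by positivity
    rcases mul_eq_zero.mp ea2 with h | h
    · exact absurd h hpos.ne'
    · exact h
  have hC : C = 0 := by
    have : C * (1 + 4 * A ^ 2 + A ^ 4) = 0 := by rw [h0, ha2]; ring
    rcases mul_eq_zero.mp this with h | h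
    · exact h
    · exact absurd h (by positivity)
  have e1 : A ^ 2 * (1 + A^2 + 3*q + A^2*q) * a 1 = 0 := by
    linear_combination -h1 - A^2*(3+q)*ha3 - 4*A*(1+A^2)*hC - (1+A^2)*(a 1)*hq'
  have ha1 : a 1 = 0 := by
    have hpos : 0 < A ^ 2 * (1 + A^2 + 3*q + A^2*q) := by positivity
    rcases mul_eq_zero.mp e1 with h | h
    · exact absurd h hpos.ne'
    · exact h
  refine ⟨?_, hC⟩
  intro k
  induction k using Nat.strong_induction_on with
  | _ k ih =>
    intro hk1
    match k, hk1 with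
    | 1, _ => exact ha1
    | 2, _ => exact ha2
    | (n+3), _ =>
      have h := hstep (n+1) (by omega)
      rw [show n+1+2 = n+3 from by omega] at h
      rw [h, ih (n+1) (by omega) (by omega)]
      ring
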